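/- arXiv:2605.05113 — 5 statements merged into one kernel-verified Lean document; each statement's English description precedes it below -/
import Mathlib

section
/- Fix a real number c > 0 and let k = k(n) be a sequence of nonnegative integers with k/√n → c as n → ∞. Then Q_{n,k} := (n/((k+1)(k+2))) · [∏_{j=0}^{k+1}(1 + j/n) − ∏_{j=0}^{k+1}(1 − j/n)] converges to (2/c²)·sinh(c²/2). -/
open Filter Finset

/-- The exact finite-width RNN signal energy `Q_{n,k}` in product form. -/
noncomputable def Q (n k : ℕ) : ℝ :=
  ((n : ℝ) / ((k + 1) * (k + 2))) *
    (∏ j ∈ Finset.range (k + 2), (1 + (j : ℝ) / n) -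
     ∏ j ∈ Finset.range (k + 2), (1 - (j : ℝ) / n))

lemma log_approx {x : ℝ} (hx : |x| ≤ 1/2) : |Real.log (1 + x) - x| ≤ 2 * x ^ 2 := by
  have h1 : |(-x)| < 1 := by rw [abs_neg]; linarith
  have h := Real.abs_log_sub_add_sum_range_le h1 1
  simp only [Finset.sum_range_one, pow_one, Nat.cast_zero, zero_add, div_one, abs_neg,
    sub_neg_eq_add] at h
  rw [show Real.log (1 + x) - x = -x + Real.log (1 + x) from by ring]
  calc |(-x) + Real.log (1 + x)| ≤ |x| ^ 2 / (1 - |x|) := h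
    _ ≤ |x| ^ 2 / (1/2) :=
        div_le_div_of_nonneg_left (by positivity) (by norm_num) (by linarith)
    _ = 2 * x ^ 2 := by rw [sq_abs]; ring

lemma sum_range_cast (m : ℕ) : ∑ j ∈ range (m + 2), (j : ℝ) = ((m:ℝ) + 1) * ((m:ℝ) + 2) / 2 := by
  have h := Finset.sum_range_id_mul_two (m + 2)
  have h' : ((∑ i ∈ range (m + 2), i : ℕ) : ℝ) * 2 = ((m:ℝ) + 2) * ((m:ℝ) + 1) := by
    exact_mod_cast congrArg (Nat.cast : ℕ → ℝ) h
  push_cast at h'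
  linarith

/-- In the critical regime `k(n)/√n → c > 0`, the signal energy
`Q_{n,k(n)}` converges to `(2/c²)·sinh(c²/2)`. -/
theorem Q_critical_regime (c : ℝ) (hc : 0 < c) (k : ℕ → ℕ)
    (hk : Tendsto (fun n => (k n : ℝ) / Real.sqrt n) atTop (nhds c)) :
    Tendsto (fun n => Q n (k n)) atTop (nhds ((2 / c ^ 2) * Real.sinh (c ^ 2 / 2))) := by
  have hinv : Tendsto (fun n : ℕ => ((n : ℝ))⁻¹) atTop (nhds 0) :=
    tendsto_inv_atTop_zero.comp tendsto_natCast_atTop_atTop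
  have hinvsqrt : Tendsto (fun n : ℕ => (Real.sqrt n)⁻¹) atTop (nhds 0) := by
    have := (Real.continuous_sqrt.tendsto 0).comp hinv
    simpa [Function.comp_def, Real.sqrt_inv] using this
  -- (k n + a)/√n → c for any constant a
  have haux : ∀ a : ℝ, Tendsto (fun n : ℕ => ((k n : ℝ) + a) / Real.sqrt n) atTop (nhds c) := by
    intro a
    have h := hk.add (hinvsqrt.const_mul a)
    rw [mul_zero, add_zero] at h
    apply h.congr; intro n
    rw [add_div, div_eq_mul_inv (a := a)]
  -- ((k+1)(k+2))/n → c²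
  have hR : Tendsto (fun n : ℕ => ((k n : ℝ) + 1) * ((k n : ℝ) + 2) / n) atTop (nhds (c ^ 2)) := by
    have h := (haux 1).mul (haux 2)
    rw [show c * c = c ^ 2 from (sq c).symm] at h
    apply h.congr' ; filter_upwards [eventually_ge_atTop 1] with n hn
    have hn0 : (0:ℝ) < n := by exact_mod_cast hn
    rw [div_mul_div_comm, Real.mul_self_sqrt hn0.le]
  -- S_n = ((k+1)(k+2))/(2n) → c²/2
  have hS : Tendsto (fun n : ℕ => ((k n : ℝ) + 1) * ((k n : ℝ) + 2) / (2 * n)) atTop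
      (nhds (c ^ 2 / 2)) := by
    apply (hR.div_const 2).congr; intro n; ring
  -- (k+2)/n → 0, hence eventually ≤ 1/2
  have htz : Tendsto (fun n : ℕ => ((k n : ℝ) + 2) / n) atTop (nhds 0) := by
    have h := (haux 2).mul hinvsqrt
    rw [mul_zero] at h
    apply h.congr'; filter_upwards [eventually_ge_atTop 1] with n hn
    have hn0 : (0:ℝ) < n := by exact_mod_cast hn
    have hss : Real.sqrt n * Real.sqrt n = (n:ℝ) := Real.mul_self_sqrt hn0.le
    have h2 : ((k n:ℝ)+2)/(n:ℝ) = ((k n:ℝ)+2)/(Real.sqrt n * Real.sqrt n) := by rw [hss]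
    rw [h2]; ring
  have hEv : ∀ᶠ n : ℕ in atTop, 1 ≤ n ∧ ((k n : ℝ) + 2) / n ≤ 1/2 := by
    filter_upwards [eventually_ge_atTop 1,
      htz.eventually_lt_const (by norm_num : (0:ℝ) < 1/2)] with n h1 h2
    exact ⟨h1, h2.le⟩
  -- error bound tends to 0
  have hB0 : Tendsto (fun n : ℕ => 2 * ((k n : ℝ) + 2) ^ 3 / (n : ℝ) ^ 2) atTop (nhds 0) := by
    have h := (((haux 2).pow 3).mul hinvsqrt).const_mul 2
    rw [mul_zero, mul_zero] at h
    apply h.congr'; filter_upwards [eventually_ge_atTop 1] with n hn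
    have hn0 : (0:ℝ) < n := by exact_mod_cast hn
    have hs0 : (0:ℝ) < Real.sqrt n := Real.sqrt_pos.mpr hn0
    have hss : Real.sqrt n * Real.sqrt n = (n:ℝ) := Real.mul_self_sqrt hn0.le
    field_simp
    ring_nf
    nlinarith [hss, sq_nonneg (Real.sqrt n), sq_nonneg ((k n : ℝ) + 2)]
  -- main product convergence for sign ε
  have main : ∀ ε : ℝ, |ε| = 1 →
      Tendsto (fun n : ℕ => ∏ j ∈ range (k n + 2), (1 + ε * (j : ℝ) / n)) atTop
        (nhds (Real.exp (ε * (c ^ 2 / 2)))) := by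
    intro ε hε
    have hx : ∀ n : ℕ, 1 ≤ n → ((k n : ℝ) + 2) / n ≤ 1/2 →
        ∀ j ∈ range (k n + 2), |ε * (j : ℝ) / n| ≤ 1/2 ∧ (j:ℝ)/n ≤ ((k n : ℝ) + 2)/n := by
      intro n hn1 hn2 j hj
      have hn0 : (0:ℝ) < n := by exact_mod_cast hn1
      have hj' : (j : ℝ) ≤ (k n : ℝ) + 2 := by
        have := Finset.mem_range.mp hj
        have : (j : ℝ) < (k n : ℝ) + 2 := by exact_mod_cast this
        linarith
      have hdiv : (j:ℝ)/n ≤ ((k n : ℝ) + 2)/n := by gcongr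
      constructor
      · rw [mul_div_assoc, abs_mul, hε, one_mul, abs_div, abs_of_nonneg (by positivity),
          abs_of_nonneg hn0.le]
        exact hdiv.trans hn2
      · exact hdiv
    -- sum of logs tends to ε c²/2
    have hsum : Tendsto (fun n : ℕ => ∑ j ∈ range (k n + 2), Real.log (1 + ε * (j : ℝ) / n))
        atTop (nhds (ε * (c ^ 2 / 2))) := by
      have hdiff : Tendsto (fun n : ℕ =>
          (∑ j ∈ range (k n + 2), Real.log (1 + ε * (j : ℝ) / n)) -
            ε * (((k n : ℝ) + 1) * ((k n : ℝ) + 2) / (2 * n))) atTop (nhds 0) := by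
        apply squeeze_zero_norm' ?_ hB0
        filter_upwards [hEv] with n hn
        obtain ⟨hn1, hn2⟩ := hn
        have hn0 : (0:ℝ) < n := by exact_mod_cast hn1
        have hsid : ∑ j ∈ range (k n + 2), (ε * (j:ℝ) / n) =
            ε * (((k n : ℝ) + 1) * ((k n : ℝ) + 2) / (2 * n)) := by
          have : ∑ j ∈ range (k n + 2), (ε * (j:ℝ) / n) =
              ε * ((∑ j ∈ range (k n + 2), (j:ℝ)) / n) := by
            rw [← Finset.sum_div, ← Finset.mul_sum, mul_div_assoc]
          rw [this, sum_range_cast]; ring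
        rw [Real.norm_eq_abs, ← hsid, ← Finset.sum_sub_distrib]
        calc |∑ j ∈ range (k n + 2), (Real.log (1 + ε * (j:ℝ)/n) - ε * (j:ℝ)/n)|
            ≤ ∑ j ∈ range (k n + 2), |Real.log (1 + ε * (j:ℝ)/n) - ε * (j:ℝ)/n| :=
              Finset.abs_sum_le_sum_abs _ _
          _ ≤ ∑ j ∈ range (k n + 2), (2 * (((k n : ℝ) + 2)/n) ^ 2) := by
              apply Finset.sum_le_sum
              intro j hj
              obtain ⟨habs, hdiv⟩ := hx n hn1 hn2 j hj
              calc |Real.log (1 + ε * (j:ℝ)/n) - ε * (j:ℝ)/n| ≤ 2 * (ε * (j:ℝ)/n) ^ 2 :=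
                    log_approx habs
                _ ≤ 2 * (((k n : ℝ) + 2)/n) ^ 2 := by
                    have h1 : (ε * (j:ℝ)/n) ^ 2 = ((j:ℝ)/n) ^ 2 := by
                      rw [mul_div_assoc, mul_pow, ← sq_abs ε, hε]; ring
                    rw [h1]
                    have h2 : ((j:ℝ)/n) ^ 2 ≤ (((k n : ℝ) + 2)/n) ^ 2 := by
                      apply pow_le_pow_left₀ (by positivity) hdiv _
                    linarith
          _ = 2 * ((k n : ℝ) + 2) ^ 3 / (n : ℝ) ^ 2 := by
              rw [Finset.sum_const, Finset.card_range, nsmul_eq_mul]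
              push_cast
              field_simp
      have h := hdiff.add (hS.const_mul ε)
      rw [zero_add] at h
      apply h.congr; intro n; ring
    -- product = exp of sum eventually
    have hprod : ∀ᶠ n : ℕ in atTop,
        Real.exp (∑ j ∈ range (k n + 2), Real.log (1 + ε * (j : ℝ) / n)) =
          ∏ j ∈ range (k n + 2), (1 + ε * (j : ℝ) / n) := by
      filter_upwards [hEv] with n hn
      obtain ⟨hn1, hn2⟩ := hn
      rw [Real.exp_sum]
      apply Finset.prod_congr rfl
      intro j hj
      obtain ⟨habs, _⟩ := hx n hn1 hn2 j hj
      have : -(1/2) ≤ ε * (j:ℝ)/n := neg_le_of_abs_le habs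
      exact Real.exp_log (by linarith)
    exact ((Real.continuous_exp.tendsto _).comp hsum).congr' hprod
  have hP1 := main 1 (by norm_num)
  have hP2 := main (-1) (by norm_num)
  have hP1' : Tendsto (fun n : ℕ => ∏ j ∈ range (k n + 2), (1 + (j : ℝ) / n)) atTop
      (nhds (Real.exp (c ^ 2 / 2))) := by
    rw [show (1:ℝ) * (c ^ 2 / 2) = c ^ 2 / 2 from one_mul _] at hP1
    apply hP1.congr; intro n
    exact Finset.prod_congr rfl fun j _ => by ring
  have hP2' : Tendsto (fun n : ℕ => ∏ j ∈ range (k n + 2), (1 - (j : ℝ) / n)) atTop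
      (nhds (Real.exp (-(c ^ 2 / 2)))) := by
    rw [show (-1:ℝ) * (c ^ 2 / 2) = -(c ^ 2 / 2) from by ring] at hP2
    apply hP2.congr; intro n
    exact Finset.prod_congr rfl fun j _ => by ring
  have hpre : Tendsto (fun n : ℕ => (n : ℝ) / (((k n : ℝ) + 1) * ((k n : ℝ) + 2))) atTop
      (nhds ((c ^ 2)⁻¹)) := by
    have h := hR.inv₀ (by positivity)
    apply h.congr; intro n; rw [inv_div]
  have hfin := hpre.mul (hP1'.sub hP2')
  have heq : (c ^ 2)⁻¹ * (Real.exp (c ^ 2 / 2) - Real.exp (-(c ^ 2 / 2)))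
      = (2 / c ^ 2) * Real.sinh (c ^ 2 / 2) := by
    rw [Real.sinh_eq]; ring
  rw [heq] at hfin
  apply hfin.congr; intro n
  rfl
end

section
/- Let k = k(n) be a sequence of nonnegative integers with k = o(√n), i.e. k/√n → 0 as n → ∞. Then Q_{n,k} := (n/((k+1)(k+2))) · [∏_{j=0}^{k+1}(1 + j/n) − ∏_{j=0}^{k+1}(1 − j/n)] converges to 1. -/
open Filter

lemma aux_one_add_sum_le_prod (s : Finset ℕ) (f : ℕ → ℝ) (h : ∀ i ∈ s, 0 ≤ f i) :
    1 + ∑ i ∈ s, f i ≤ ∏ i ∈ s, (1 + f i) := by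
  induction s using Finset.cons_induction with
  | empty => simp
  | cons a s ha ih =>
    rw [Finset.sum_cons, Finset.prod_cons]
    have hfa : 0 ≤ f a := h a (Finset.mem_cons_self a s)
    have hs : ∀ i ∈ s, 0 ≤ f i := fun i hi => h i (Finset.mem_cons_of_mem hi)
    have hsum : 0 ≤ ∑ i ∈ s, f i := Finset.sum_nonneg hs
    have := ih hs
    nlinarith
lemma aux_one_sub_sum_le_prod (s : Finset ℕ) (f : ℕ → ℝ)
    (h0 : ∀ i ∈ s, 0 ≤ f i) (h1 : ∀ i ∈ s, f i ≤ 1) :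
    1 - ∑ i ∈ s, f i ≤ ∏ i ∈ s, (1 - f i) := by
  induction s using Finset.cons_induction with
  | empty => simp
  | cons a s ha ih =>
    rw [Finset.sum_cons, Finset.prod_cons]
    have hfa : 0 ≤ f a := h0 a (Finset.mem_cons_self a s)
    have hfa1 : f a ≤ 1 := h1 a (Finset.mem_cons_self a s)
    have hs0 : ∀ i ∈ s, 0 ≤ f i := fun i hi => h0 i (Finset.mem_cons_of_mem hi)
    have hs1 : ∀ i ∈ s, f i ≤ 1 := fun i hi => h1 i (Finset.mem_cons_of_mem hi)
    have hsum : 0 ≤ ∑ i ∈ s, f i := Finset.sum_nonneg hs0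
    have := ih hs0 hs1
    nlinarith
lemma aux_prod_le_one (s : Finset ℕ) (f : ℕ → ℝ)
    (h0 : ∀ i ∈ s, 0 ≤ f i) (h1 : ∀ i ∈ s, f i ≤ 1) :
    ∏ i ∈ s, f i ≤ 1 :=
  Finset.prod_le_one h0 h1

/-- Key quantitative estimate. -/
lemma Q_est (n k : ℕ) (hn : 1 ≤ n) (hkn : (k + 1) * (k + 2) ≤ 2 * n) :
    |Q n k - 1| ≤ ((k : ℝ) + 1) * ((k : ℝ) + 2) / (2 * n) := by
  have hnR : (0:ℝ) < n := by exact_mod_cast hn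
  set S : ℝ := ((k : ℝ) + 1) * ((k : ℝ) + 2) / (2 * n) with hS
  have hS0 : 0 ≤ S := by positivity
  have hS1 : S ≤ 1 := by
    rw [hS, div_le_one (by positivity)]
    have : ((k:ℝ) + 1) * ((k:ℝ) + 2) = (((k+1)*(k+2) : ℕ) : ℝ) := by push_cast; ring
    rw [this]
    exact_mod_cast hkn
  -- each j ≤ k+1 satisfies j ≤ n
  have hjn : ∀ j ∈ Finset.range (k + 2), (j : ℝ) / n ≤ 1 := by
    intro j hj
    rw [Finset.mem_range] at hj
    rw [div_le_one hnR]
    have : j ≤ n := by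
      have h3 : (k+1)*2 ≤ (k+1)*(k+2) := Nat.mul_le_mul_left _ (by omega)
      omega
    exact_mod_cast this
  have hj0 : ∀ j ∈ Finset.range (k + 2), (0:ℝ) ≤ (j : ℝ) / n := by
    intro j _; positivity
  -- the sum
  have hsum : ∑ j ∈ Finset.range (k + 2), (j : ℝ) / n = S := by
    rw [← Finset.sum_div]
    have h2 : (∑ j ∈ Finset.range (k + 2), (j:ℕ)) * 2 = (k+2) * (k+1) :=
      Finset.sum_range_id_mul_two (k+2)
    have : (∑ j ∈ Finset.range (k + 2), (j : ℝ)) = ((k:ℝ)+1) * ((k:ℝ)+2) / 2 := by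
      have := congrArg (fun m : ℕ => (m : ℝ)) h2
      push_cast at this
      linarith
    rw [this, hS]; ring
  set P : ℝ := ∏ j ∈ Finset.range (k + 2), (1 + (j : ℝ) / n) with hP
  set M : ℝ := ∏ j ∈ Finset.range (k + 2), (1 - (j : ℝ) / n) with hM
  have hPlb : 1 + S ≤ P := by
    rw [← hsum]; exact aux_one_add_sum_le_prod _ _ hj0
  have hPub : P ≤ Real.exp S := by
    rw [← hsum, Real.exp_sum]
    apply Finset.prod_le_prod
    · intro j hj; have := hj0 j hj; linarith
    · intro j hj; linarith [Real.add_one_le_exp ((j:ℝ)/n)]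
  have hMlb : 1 - S ≤ M := by
    rw [← hsum]
    exact aux_one_sub_sum_le_prod _ _ hj0 hjn
  have hMP : M * P ≤ 1 := by
    rw [hM, hP, ← Finset.prod_mul_distrib]
    apply aux_prod_le_one
    · intro j hj
      have h1 := hj0 j hj; have h2 := hjn j hj
      nlinarith
    · intro j hj
      have h1 := hj0 j hj
      nlinarith
  have hPpos : 0 < P := by linarith
  have hMub : M ≤ 1 / P := by
    rw [le_div_iff₀ hPpos]; exact hMP
  -- Q = (P - M) / (2 S)
  have hSpos : 0 < S := by
    rw [hS]; positivity
  have hQ : Q n k = (P - M) / (2 * S) := by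
    rw [Q, ← hP, ← hM, hS]
    field_simp
  -- lower bound: P - M ≥ (1+S) - 1/(1+S)
  have hinv : 1 / P ≤ 1 / (1 + S) := by
    apply one_div_le_one_div_of_le (by linarith) hPlb
  have hlow : (1 + S) - 1 / (1 + S) ≤ P - M := by
    have : M ≤ 1 / (1 + S) := le_trans hMub hinv
    linarith
  have hQlow : 1 - S ≤ Q n k := by
    rw [hQ, le_div_iff₀ (by positivity)]
    have h1 : (1 + S) - 1 / (1 + S) = (2*S + S^2) / (1 + S) := by
      field_simp; ring
    rw [h1] at hlow
    have h2 : (1 - S) * (2 * S) ≤ (2*S + S^2) / (1 + S) := by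
      rw [le_div_iff₀ (by linarith)]
      nlinarith
    linarith
  -- upper bound: exp S - 1 - S ≤ (3/4) S^2
  have hexp : Real.exp S - 1 - S ≤ (3/4) * S^2 := by
    have habs : |S| ≤ 1 := by rw [abs_of_nonneg hS0]; exact hS1
    have := Real.exp_bound habs (n := 2) (by norm_num)
    have hsum2 : ∑ m ∈ Finset.range 2, S ^ m / m.factorial = 1 + S := by
      simp [Finset.sum_range_succ, Nat.factorial]
    rw [hsum2] at this
    have habs2 : |S| ^ 2 = S ^ 2 := by rw [abs_of_nonneg hS0]
    have h2 : |Real.exp S - (1 + S)| ≤ S ^ 2 * (3 / 4) := by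
      calc |Real.exp S - (1 + S)| ≤ |S| ^ 2 * ((2:ℕ).succ / ((2:ℕ).factorial * 2)) := this
        _ = S ^ 2 * (3/4) := by rw [habs2]; norm_num [Nat.factorial]
    have := abs_le.mp h2
    linarith [this.2]
  have hQhigh : Q n k ≤ 1 + S := by
    rw [hQ, div_le_iff₀ (by positivity)]
    have : P - M ≤ Real.exp S - (1 - S) := by linarith
    nlinarith
  rw [abs_le]
  constructor <;> [linarith; linarith]

/-- In the subcritical regime `k(n) = o(√n)`, the signal energy
`Q_{n,k(n)}` converges to `1` (the infinite-width prediction). -/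
theorem Q_subcritical_regime (k : ℕ → ℕ)
    (hk : Tendsto (fun n => (k n : ℝ) / Real.sqrt n) atTop (nhds 0)) :
    Tendsto (fun n => Q n (k n)) atTop (nhds 1) := by
  set S : ℕ → ℝ := fun n => ((k n : ℝ) + 1) * ((k n : ℝ) + 2) / (2 * n) with hSdef
  have hsqrtTop : Tendsto (fun n : ℕ => Real.sqrt n) atTop atTop := by
    apply tendsto_atTop_atTop.2
    intro b
    refine ⟨Nat.ceil (b ^ 2), fun n hn => ?_⟩
    have hb2 : b ^ 2 ≤ (n : ℝ) := by
      calc b ^ 2 ≤ (Nat.ceil (b ^ 2) : ℝ) := Nat.le_ceil _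
        _ ≤ n := by exact_mod_cast hn
    calc b ≤ |b| := le_abs_self b
      _ = Real.sqrt (b ^ 2) := (Real.sqrt_sq_eq_abs b).symm
      _ ≤ Real.sqrt n := Real.sqrt_le_sqrt hb2
  have h1 : Tendsto (fun n => ((k n : ℝ) + 2) / Real.sqrt n) atTop (nhds 0) := by
    have h2 : Tendsto (fun n : ℕ => (2 : ℝ) / Real.sqrt n) atTop (nhds 0) :=
      Tendsto.div_atTop tendsto_const_nhds hsqrtTop
    have heq : (fun n : ℕ => ((k n : ℝ) + 2) / Real.sqrt n)
        = fun n => (k n : ℝ) / Real.sqrt n + 2 / Real.sqrt n := by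
      funext n; rw [add_div]
    rw [heq]
    simpa using hk.add h2
  have hS0 : Tendsto S atTop (nhds 0) := by
    have hsq : Tendsto (fun n => (((k n : ℝ) + 2) / Real.sqrt n) ^ 2 / 2) atTop (nhds 0) := by
      have := (h1.mul h1).div_const 2
      simpa [sq] using this
    apply squeeze_zero' (Filter.Eventually.of_forall (fun n => by positivity)) _ hsq
    filter_upwards [Filter.eventually_ge_atTop 1] with n hn
    have hnR : (0 : ℝ) < n := by exact_mod_cast hn
    have hsqrt : Real.sqrt n ^ 2 = n := Real.sq_sqrt hnR.le
    have heq : (((k n : ℝ) + 2) / Real.sqrt n) ^ 2 / 2 = ((k n : ℝ) + 2) ^ 2 / (2 * n) := by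
      rw [div_pow, hsqrt]; ring
    simp only [hSdef]
    rw [heq]
    have hnum : ((k n : ℝ) + 1) * ((k n : ℝ) + 2) ≤ ((k n : ℝ) + 2) ^ 2 := by
      nlinarith [(Nat.cast_nonneg (k n) : (0:ℝ) ≤ (k n : ℝ))]
    have hden : (0:ℝ) ≤ 2 * n := by positivity
    exact div_le_div_of_nonneg_right hnum hden
  -- eventually the hypotheses of Q_est hold
  have hEv : ∀ᶠ n in atTop, |Q n (k n) - 1| ≤ S n := by
    have hSlt : ∀ᶠ n in atTop, S n < 1 := hS0.eventually (gt_mem_nhds one_pos)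
    filter_upwards [hSlt, Filter.eventually_ge_atTop 1] with n h1 h2
    have hnR : (0 : ℝ) < n := by exact_mod_cast h2
    have h3 : ((k n : ℝ) + 1) * ((k n : ℝ) + 2) < 2 * n := by
      have := (div_lt_one (by positivity : (0:ℝ) < 2 * n)).mp h1
      linarith
    have h4 : (k n + 1) * (k n + 2) ≤ 2 * n := by
      have : (((k n + 1) * (k n + 2) : ℕ) : ℝ) < ((2 * n : ℕ) : ℝ) := by push_cast; linarith
      exact_mod_cast this.le
    exact Q_est n (k n) h2 h4
  have : Tendsto (fun n => Q n (k n) - 1) atTop (nhds 0) := by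
    apply squeeze_zero_norm' _ hS0
    filter_upwards [hEv] with n hn
    simpa [Real.norm_eq_abs] using hn
  have := this.add (tendsto_const_nhds (x := (1 : ℝ)))
  simpa using this
end

section
/- Let t = t(n) be a sequence with t = o(√n). Then S_{n,t} := Σ_{k=0}^{t} Q_{n,k}, where Q_{n,k} = (n/((k+1)(k+2))) · [∏_{j=0}^{k+1}(1 + j/n) − ∏_{j=0}^{k+1}(1 − j/n)], satisfies S_{n,t}/(t+1) → 1 as n → ∞. -/
/-!
Put `x_j = j / n`, so that `Q_{n,k} = (∏ (1 + x_j) - ∏ (1 - x_j)) / (2 ∑ x_j)` with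
`∑_{j ≤ k+1} x_j = (k+1)(k+2)/(2n)`. For `x_j ∈ [0, 1]` the difference of the two products lies
between `2 ∑ x_j` and `2 ∑ x_j · ∏ (1 + x_j) ≤ 2 ∑ x_j · exp (∑ x_j)`: a new factor `x_a` adds
`x_a (∏ (1 + x_j) + ∏ (1 - x_j))` to the difference, and that sum of products stays in
`[2, 2 ∏ (1 + x_j)]`. Hence
`1 ≤ Q_{n,k} ≤ exp ((k+1)(k+2)/(2n))` as long as `k + 1 ≤ n`. Averaging over `k ≤ t` squeezes
`S_{n,t}/(t+1)` between `1` and `exp ((t+1)(t+2)/(2n))`, and the exponent tends to `0` because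
`t = o(√n)`.
-/

open Filter

/-- The cumulative LRU signal energy `S_{n,t} = Σ_{k=0}^t Q_{n,k}`. -/
noncomputable def S (n t : ℕ) : ℝ := ∑ k ∈ Finset.range (t + 1), Q n k

open Finset Topology

section ProdOneAddSubProdOneSub

variable {ι : Type*} {s : Finset ι} {x : ι → ℝ}

lemma prod_one_sub_le_prod_one_add (h0 : ∀ i ∈ s, 0 ≤ x i) (h1 : ∀ i ∈ s, x i ≤ 1) :
    ∏ i ∈ s, (1 - x i) ≤ ∏ i ∈ s, (1 + x i) :=
  prod_le_prod (fun i hi => by linarith [h1 i hi]) (fun i hi => by linarith [h0 i hi])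

lemma two_le_prod_one_add_add_prod_one_sub (h0 : ∀ i ∈ s, 0 ≤ x i) (h1 : ∀ i ∈ s, x i ≤ 1) :
    2 ≤ ∏ i ∈ s, (1 + x i) + ∏ i ∈ s, (1 - x i) := by
  induction s using Finset.cons_induction with
  | empty => norm_num
  | cons a s ha ih =>
    have h0' : ∀ i ∈ s, 0 ≤ x i := fun i hi => h0 i (mem_cons_of_mem hi)
    have h1' : ∀ i ∈ s, x i ≤ 1 := fun i hi => h1 i (mem_cons_of_mem hi)
    have hle := prod_one_sub_le_prod_one_add h0' h1'
    rw [prod_cons ha, prod_cons ha]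
    nlinarith [ih h0' h1', mul_nonneg (h0 a (mem_cons_self a s)) (sub_nonneg.2 hle)]

lemma two_mul_sum_le_prod_one_add_sub_prod_one_sub (h0 : ∀ i ∈ s, 0 ≤ x i)
    (h1 : ∀ i ∈ s, x i ≤ 1) :
    2 * ∑ i ∈ s, x i ≤ ∏ i ∈ s, (1 + x i) - ∏ i ∈ s, (1 - x i) := by
  induction s using Finset.cons_induction with
  | empty => simp
  | cons a s ha ih =>
    have h0' : ∀ i ∈ s, 0 ≤ x i := fun i hi => h0 i (mem_cons_of_mem hi)
    have h1' : ∀ i ∈ s, x i ≤ 1 := fun i hi => h1 i (mem_cons_of_mem hi)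
    have htwo := two_le_prod_one_add_add_prod_one_sub h0' h1'
    rw [sum_cons ha, prod_cons ha, prod_cons ha]
    nlinarith [ih h0' h1', mul_le_mul_of_nonneg_left htwo (h0 a (mem_cons_self a s))]

lemma prod_one_add_sub_prod_one_sub_le (h0 : ∀ i ∈ s, 0 ≤ x i) (h1 : ∀ i ∈ s, x i ≤ 1) :
    ∏ i ∈ s, (1 + x i) - ∏ i ∈ s, (1 - x i) ≤ 2 * (∑ i ∈ s, x i) * ∏ i ∈ s, (1 + x i) := by
  induction s using Finset.cons_induction with
  | empty => simp
  | cons a s ha ih =>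
    have h0' : ∀ i ∈ s, 0 ≤ x i := fun i hi => h0 i (mem_cons_of_mem hi)
    have h1' : ∀ i ∈ s, x i ≤ 1 := fun i hi => h1 i (mem_cons_of_mem hi)
    have hxa := h0 a (mem_cons_self a s)
    have hle := prod_one_sub_le_prod_one_add h0' h1'
    have hsum : 0 ≤ ∑ i ∈ s, x i := sum_nonneg h0'
    have hprod : 0 ≤ ∏ i ∈ s, (1 + x i) := prod_nonneg fun i hi => by linarith [h0' i hi]
    rw [sum_cons ha, prod_cons ha, prod_cons ha]
    nlinarith [ih h0' h1', mul_le_mul_of_nonneg_left hle hxa,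
      mul_nonneg (mul_nonneg (add_nonneg hsum hxa) hxa) hprod]

end ProdOneAddSubProdOneSub

lemma sum_range_natCast_div (n k : ℕ) :
    ∑ j ∈ range (k + 2), (j : ℝ) / n = (k + 1) * (k + 2) / (2 * n) := by
  induction k with
  | zero => simp [sum_range_succ]; ring
  | succ k ih => rw [sum_range_succ, ih]; push_cast; ring

lemma two_mul_sum_range_natCast_div_pos {n : ℕ} (hn : n ≠ 0) (k : ℕ) :
    0 < 2 * ∑ j ∈ range (k + 2), (j : ℝ) / n := by
  rw [sum_range_natCast_div]
  positivity

lemma Q_eq_div {n : ℕ} (hn : n ≠ 0) (k : ℕ) :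
    Q n k = (∏ j ∈ range (k + 2), (1 + (j : ℝ) / n) - ∏ j ∈ range (k + 2), (1 - (j : ℝ) / n)) /
      (2 * ∑ j ∈ range (k + 2), (j : ℝ) / n) := by
  rw [Q, sum_range_natCast_div]
  field_simp

section Bounds

variable {n k : ℕ}

lemma natCast_div_le_one_of_mem_range (hk : k + 1 ≤ n) :
    ∀ j ∈ range (k + 2), (j : ℝ) / n ≤ 1 := fun j hj =>
  div_le_one_of_le₀ (by rw [mem_range] at hj; exact_mod_cast (by omega : j ≤ n))
    (Nat.cast_nonneg n)

lemma one_le_Q (hk : k + 1 ≤ n) : 1 ≤ Q n k := by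
  rw [Q_eq_div (by omega), le_div_iff₀ (two_mul_sum_range_natCast_div_pos (by omega) k), one_mul]
  exact two_mul_sum_le_prod_one_add_sub_prod_one_sub (fun j _ => by positivity)
    (natCast_div_le_one_of_mem_range hk)

lemma Q_le_exp (hk : k + 1 ≤ n) : Q n k ≤ Real.exp ((k + 1) * (k + 2) / (2 * n)) := by
  rw [Q_eq_div (by omega), div_le_iff₀ (two_mul_sum_range_natCast_div_pos (by omega) k),
    ← sum_range_natCast_div, mul_comm]
  calc _ ≤ 2 * (∑ j ∈ range (k + 2), (j : ℝ) / n) * ∏ j ∈ range (k + 2), (1 + (j : ℝ) / n) :=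
        prod_one_add_sub_prod_one_sub_le (fun j _ => by positivity)
          (natCast_div_le_one_of_mem_range hk)
    _ ≤ _ := by
        gcongr
        exact Real.prod_one_add_le_exp_sum _ fun j => by positivity

variable {t : ℕ}

lemma succ_le_S (ht : t + 1 ≤ n) : (t + 1 : ℝ) ≤ S n t := by
  simpa [S] using card_nsmul_le_sum (range (t + 1)) (Q n) 1 fun k hk =>
    one_le_Q (by rw [mem_range] at hk; omega)

lemma S_le_succ_mul_exp (ht : t + 1 ≤ n) :
    S n t ≤ (t + 1) * Real.exp ((t + 1) * (t + 2) / (2 * n)) := by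
  have hQ : ∀ k ∈ range (t + 1), Q n k ≤ Real.exp ((t + 1) * (t + 2) / (2 * n)) := by
    intro k hk
    have hkt : k ≤ t := by rw [mem_range] at hk; omega
    refine (Q_le_exp (by omega)).trans (Real.exp_le_exp.2 ?_)
    gcongr
  simpa [S] using sum_le_card_nsmul (range (t + 1)) (Q n) _ hQ

end Bounds

lemma tendsto_add_const_div_sqrt {a : ℕ → ℝ} (ha : Tendsto (fun n => a n / √n) atTop (𝓝 0))
    (c : ℝ) : Tendsto (fun n => (a n + c) / √n) atTop (𝓝 0) := by
  simp_rw [add_div]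
  simpa using ha.add
    (tendsto_const_nhds.div_atTop (Real.tendsto_sqrt_atTop.comp tendsto_natCast_atTop_atTop))

lemma tendsto_succ_mul_succ_succ_div {a : ℕ → ℝ} (ha : Tendsto (fun n => a n / √n) atTop (𝓝 0)) :
    Tendsto (fun n => (a n + 1) * (a n + 2) / (2 * n)) atTop (𝓝 0) := by
  have h := ((tendsto_add_const_div_sqrt ha 1).mul (tendsto_add_const_div_sqrt ha 2)).const_mul 2⁻¹
  rw [mul_zero, mul_zero] at h
  refine h.congr' ?_
  filter_upwards [eventually_gt_atTop 0] with n hn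
  field_simp
  rw [Real.sq_sqrt n.cast_nonneg]
  ring

lemma succ_le_of_div_lt_one {n k : ℕ} (hn : n ≠ 0) (h : ((k : ℝ) + 1) * (k + 2) / (2 * n) < 1) :
    k + 1 ≤ n := by
  rw [div_lt_one (by positivity)] at h
  have : (k : ℝ) + 1 < n := by nlinarith
  exact_mod_cast this.le

/-- In the subcritical regime `t(n) = o(√n)`, the cumulative LRU signal
energy satisfies `S_{n,t}/(t+1) → 1`. -/
theorem S_subcritical_regime (t : ℕ → ℕ)
    (ht : Tendsto (fun n => (t n : ℝ) / Real.sqrt n) atTop (nhds 0)) :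
    Tendsto (fun n => S n (t n) / (t n + 1)) atTop (nhds 1) := by
  have hexponent := tendsto_succ_mul_succ_succ_div ht
  have hlarge : ∀ᶠ n in atTop, t n + 1 ≤ n := by
    filter_upwards [hexponent.eventually (gt_mem_nhds one_pos), eventually_ne_atTop 0]
      with n hlt hn using succ_le_of_div_lt_one hn hlt
  have hexp := (Real.continuous_exp.tendsto 0).comp hexponent
  rw [Real.exp_zero] at hexp
  refine tendsto_of_tendsto_of_tendsto_of_le_of_le' tendsto_const_nhds hexp ?_ ?_
  · filter_upwards [hlarge] with n hn
    rw [le_div_iff₀ (by positivity), one_mul]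
    exact succ_le_S hn
  · filter_upwards [hlarge] with n hn
    rw [Function.comp_apply, div_le_iff₀ (by positivity), mul_comm]
    exact S_le_succ_mul_exp hn
end

section
/- Fix c > 0 and let t = t(n) satisfy t/√n → c. Define q(x) = 1 for x = 0 and q(x) = (2/x²)·sinh(x²/2) for x > 0. Then S_{n,t}/√n → ∫_0^c q(x) dx, where S_{n,t} = Σ_{k=0}^{t} Q_{n,k} and Q_{n,k} = (n/((k+1)(k+2)))·[∏_{j=0}^{k+1}(1 + j/n) − ∏_{j=0}^{k+1}(1 − j/n)]. -/
open Filter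

/-- The continuous critical profile `q(x)`: `q(0) = 1` and `q(x) = (2/x²)·sinh(x²/2)`
for `x > 0`. -/
noncomputable def qProfile (x : ℝ) : ℝ :=
  if x = 0 then 1 else (2 / x ^ 2) * Real.sinh (x ^ 2 / 2)

/-!
Write `u = (k+1)(k+2)/(2n) = ∑_{j<k+2} j/n`. Up to factors `exp (-2 ∑ (j/n)²)`, the products
`∏ (1 ± j/n)` are `exp (± u)`, so `Q n k = sinh u / u + O((k+1)/n)` whenever `2(k+1) ≤ n`; over the
window `k ≤ t ≈ c√n` the accumulated error is `O(t²/n) = o(√n)`.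

We write `sinh u / u` as `dslope sinh 0 u`, which is continuous with value `1` at `0`, so that
`q x = dslope sinh 0 (x²/2)`. Convexity of `sinh` on `[0, ∞)` makes `dslope sinh 0` increasing
there, and `(k+1)² ≤ 2nu ≤ (k+2)²` squeezes `sinh u / u` between `q ((k+1)/√n)` and
`q ((k+2)/√n)`. Hence `∑_{k ≤ t} sinh u / u / √n` lies between two Riemann sums of the increasing
function `q` with mesh `1/√n`, and both converge to `∫_0^c q`.
-/

open Real Topology Finset

lemma exp_sub_two_mul_sq_le_one_add {x : ℝ} (hx : -1 / 2 ≤ x) : exp (x - 2 * x ^ 2) ≤ 1 + x := by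
  set y := x - 2 * x ^ 2
  have hy : exp y * (1 - y) ≤ 1 := by
    have h := add_one_le_exp (-y)
    have hinv : exp y * exp (-y) = 1 := by rw [← exp_add, add_neg_cancel, exp_zero]
    nlinarith [exp_pos y]
  have hprod : 1 ≤ (1 + x) * (1 - y) := by nlinarith [sq_nonneg x]
  nlinarith [exp_pos y]

section Products

variable {ι : Type*} (s : Finset ι) (x : ι → ℝ)

lemma exp_sum_sub_le_prod_one_add (hx : ∀ i ∈ s, |x i| ≤ 1 / 2) :
    exp (∑ i ∈ s, x i - 2 * ∑ i ∈ s, x i ^ 2) ≤ ∏ i ∈ s, (1 + x i) := by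
  rw [mul_sum, ← sum_sub_distrib, exp_sum]
  exact prod_le_prod (fun i _ ↦ (exp_pos _).le)
    fun i hi ↦ exp_sub_two_mul_sq_le_one_add (by linarith [(abs_le.1 (hx i hi)).1])

lemma prod_one_add_le_exp_sum (hx : ∀ i ∈ s, -1 ≤ x i) :
    ∏ i ∈ s, (1 + x i) ≤ exp (∑ i ∈ s, x i) := by
  rw [exp_sum]
  exact prod_le_prod (fun i hi ↦ by linarith [hx i hi])
    fun i _ ↦ by linarith [add_one_le_exp (x i)]

lemma abs_prod_one_add_sub_exp_sum_le (hx : ∀ i ∈ s, |x i| ≤ 1 / 2) :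
    |∏ i ∈ s, (1 + x i) - exp (∑ i ∈ s, x i)| ≤ 2 * exp (∑ i ∈ s, x i) * ∑ i ∈ s, x i ^ 2 := by
  have hlow := exp_sum_sub_le_prod_one_add s x hx
  have hup := prod_one_add_le_exp_sum s x fun i hi ↦ by linarith [(abs_le.1 (hx i hi)).1]
  set U := ∑ i ∈ s, x i
  set E := ∑ i ∈ s, x i ^ 2
  rw [sub_eq_add_neg, exp_add] at hlow
  have hE : 1 - 2 * E ≤ exp (-(2 * E)) := by linarith [add_one_le_exp (-(2 * E))]
  rw [abs_le]
  constructor <;> nlinarith [exp_pos U]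

lemma abs_prod_one_add_sub_prod_one_sub_sub_two_mul_sinh_le (hx : ∀ i ∈ s, |x i| ≤ 1 / 2) :
    |∏ i ∈ s, (1 + x i) - ∏ i ∈ s, (1 - x i) - 2 * sinh (∑ i ∈ s, x i)| ≤
      4 * cosh (∑ i ∈ s, x i) * ∑ i ∈ s, x i ^ 2 := by
  have hplus := abs_prod_one_add_sub_exp_sum_le s x hx
  have hminus := abs_prod_one_add_sub_exp_sum_le s (fun i ↦ -x i) (by simpa only [abs_neg])
  simp only [sum_neg_distrib, neg_sq, ← sub_eq_add_neg] at hminus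
  calc _ = |(∏ i ∈ s, (1 + x i) - exp (∑ i ∈ s, x i)) -
          (∏ i ∈ s, (1 - x i) - exp (-∑ i ∈ s, x i))| := by rw [sinh_eq]; ring_nf
    _ ≤ _ := abs_sub _ _
    _ ≤ _ := add_le_add hplus hminus
    _ = _ := by rw [cosh_eq]; ring

end Products

noncomputable def Qexponent (n k : ℕ) : ℝ := (k + 1) * (k + 2) / (2 * n)

lemma Qexponent_pos {n : ℕ} (hn : 0 < n) (k : ℕ) : 0 < Qexponent n k := by
  unfold Qexponent; positivity

lemma Qexponent_mono (n : ℕ) : Monotone (Qexponent n) := by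
  intro k l hkl
  have : (k : ℝ) ≤ l := by exact_mod_cast hkl
  unfold Qexponent
  gcongr

lemma sum_range_div_eq_Qexponent (n k : ℕ) :
    ∑ j ∈ range (k + 2), (j : ℝ) / n = Qexponent n k := by
  have gauss : ∑ j ∈ range (k + 2), (j : ℝ) = (k + 1) * (k + 2) / 2 := by
    induction k with
    | zero => norm_num [sum_range_succ]
    | succ k ih => rw [sum_range_succ, ih]; push_cast; ring
  rw [← sum_div, gauss, Qexponent, div_div]

lemma sum_range_div_sq_le (n k : ℕ) :
    ∑ j ∈ range (k + 2), ((j : ℝ) / n) ^ 2 ≤ (k + 1) / n * Qexponent n k := by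
  rw [← sum_range_div_eq_Qexponent, mul_sum]
  refine sum_le_sum fun j hj ↦ ?_
  have hj : (j : ℝ) ≤ k + 1 := by exact_mod_cast Nat.lt_succ_iff.1 (mem_range.1 hj)
  rw [sq]
  gcongr

lemma Q_eq (n k : ℕ) :
    Q n k = (∏ j ∈ range (k + 2), (1 + (j : ℝ) / n) - ∏ j ∈ range (k + 2), (1 - (j : ℝ) / n)) /
      (2 * Qexponent n k) := by
  have h2u : 2 * Qexponent n k = (k + 1) * (k + 2) / n := by rw [Qexponent]; ring
  rw [Q, h2u, div_div_eq_mul_div]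
  ring

lemma abs_Q_sub_dslope_sinh_le {n k : ℕ} (hk : 2 * (k + 1) ≤ n) :
    |Q n k - dslope sinh 0 (Qexponent n k)| ≤ 2 * cosh (Qexponent n k) * ((k + 1) / n) := by
  have hu := Qexponent_pos (n := n) (by omega) k
  have hn : (0 : ℝ) < n := by exact_mod_cast (show 0 < n by omega)
  have hx : ∀ j ∈ range (k + 2), |(j : ℝ) / n| ≤ 1 / 2 := by
    intro j hj
    have hj : 2 * j ≤ n := by have := mem_range.1 hj; omega
    rw [abs_of_nonneg (by positivity), div_le_iff₀ hn]
    have : (2 * j : ℝ) ≤ n := by exact_mod_cast hj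
    linarith
  have key := abs_prod_one_add_sub_prod_one_sub_sub_two_mul_sinh_le _ _ hx
  rw [sum_range_div_eq_Qexponent] at key
  have hE := sum_range_div_sq_le n k
  rw [dslope_of_ne _ hu.ne', slope_def_field, sinh_zero, sub_zero, sub_zero, Q_eq]
  set u := Qexponent n k
  set D := ∏ j ∈ range (k + 2), (1 + (j : ℝ) / n) - ∏ j ∈ range (k + 2), (1 - (j : ℝ) / n)
  have h2u : 0 < 2 * u := by positivity
  rw [show D / (2 * u) - sinh u / u = (D - 2 * sinh u) / (2 * u) by field_simp, abs_div,
    abs_of_pos h2u, div_le_iff₀ h2u]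
  calc |D - 2 * sinh u| ≤ 4 * cosh u * ((k + 1) / n * u) := key.trans (by gcongr)
    _ = 2 * cosh u * ((k + 1) / n) * (2 * u) := by ring

lemma abs_S_sub_sum_dslope_sinh_le {n t : ℕ} (ht : 2 * (t + 1) ≤ n) :
    |S n t - ∑ k ∈ range (t + 1), dslope sinh 0 (Qexponent n k)| ≤
      2 * cosh (Qexponent n t) * (t + 1) ^ 2 / n := by
  have hterm : ∀ k ∈ range (t + 1), |Q n k - dslope sinh 0 (Qexponent n k)| ≤
      2 * cosh (Qexponent n t) * ((t + 1) / n) := by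
    intro k hk
    have hkt := Nat.lt_succ_iff.1 (mem_range.1 hk)
    have hkt' : (k : ℝ) ≤ t := by exact_mod_cast hkt
    refine (abs_Q_sub_dslope_sinh_le (by omega)).trans ?_
    have hu : cosh (Qexponent n k) ≤ cosh (Qexponent n t) := by
      rw [cosh_le_cosh, abs_of_pos (Qexponent_pos (by omega) k),
        abs_of_pos (Qexponent_pos (by omega) t)]
      exact Qexponent_mono n hkt
    gcongr
  calc |S n t - ∑ k ∈ range (t + 1), dslope sinh 0 (Qexponent n k)|
      ≤ ∑ k ∈ range (t + 1), |Q n k - dslope sinh 0 (Qexponent n k)| := by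
        rw [S, ← sum_sub_distrib]; exact abs_sum_le_sum_abs _ _
    _ ≤ (t + 1) * (2 * cosh (Qexponent n t) * ((t + 1) / n)) := by
        simpa using sum_le_card_nsmul _ _ _ hterm
    _ = _ := by ring

lemma ConvexOn.monotoneOn_dslope {S : Set ℝ} {f : ℝ → ℝ} {a : ℝ} (hf : ConvexOn ℝ S f)
    (ha : a ∈ S) (hfa : DifferentiableAt ℝ f a) : MonotoneOn (dslope f a) {y ∈ S | a ≤ y} := by
  rintro x ⟨hxS, hax⟩ y ⟨hyS, hay⟩ hxy
  rcases hax.eq_or_lt with rfl | hax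
  · rcases hay.eq_or_lt with rfl | hay
    · rfl
    · rw [dslope_same, dslope_of_ne _ hay.ne']
      exact hf.deriv_le_slope ha hyS hay hfa
  · rw [dslope_of_ne _ hax.ne', dslope_of_ne _ (hax.trans_le hxy).ne']
    exact hf.monotoneOn_slope_gt ha ⟨hxS, hax⟩ ⟨hyS, hax.trans_le hxy⟩ hxy

lemma convexOn_sinh : ConvexOn ℝ (Set.Ici 0) sinh := by
  refine MonotoneOn.convexOn_of_deriv (convex_Ici 0) continuous_sinh.continuousOn
    differentiable_sinh.differentiableOn ?_
  rw [Real.deriv_sinh, interior_Ici]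
  intro x hx y hy hxy
  rw [cosh_le_cosh, abs_of_pos hx, abs_of_pos hy]
  exact hxy

lemma monotoneOn_dslope_sinh : MonotoneOn (dslope sinh 0) (Set.Ici 0) :=
  (convexOn_sinh.monotoneOn_dslope (Set.mem_Ici.2 le_rfl) (differentiable_sinh 0)).mono
    fun _ hy ↦ ⟨hy, hy⟩

lemma qProfile_eq_dslope (x : ℝ) : qProfile x = dslope sinh 0 (x ^ 2 / 2) := by
  rcases eq_or_ne x 0 with rfl | hx
  · simp [qProfile, dslope_same]
  · rw [qProfile, if_neg hx, dslope_of_ne _ (by positivity), slope_def_field, sinh_zero, sub_zero,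
      sub_zero]
    field_simp

lemma continuous_qProfile : Continuous qProfile := by
  have : Continuous (dslope sinh 0) := continuousOn_univ.1 <|
    (continuousOn_dslope Filter.univ_mem).2 ⟨continuous_sinh.continuousOn, differentiable_sinh _⟩
  rw [funext qProfile_eq_dslope]
  exact this.comp (by fun_prop)

lemma monotoneOn_qProfile : MonotoneOn qProfile (Set.Ici 0) := by
  intro x hx y hy hxy
  rw [qProfile_eq_dslope, qProfile_eq_dslope]
  exact monotoneOn_dslope_sinh (by simp; positivity) (by simp; positivity) (by gcongr)

lemma qProfile_le_dslope_sinh_Qexponent (n k : ℕ) :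
    qProfile ((k + 1) / √n) ≤ dslope sinh 0 (Qexponent n k) := by
  rw [qProfile_eq_dslope]
  refine monotoneOn_dslope_sinh (by simp; positivity) (by simp [Qexponent]; positivity) ?_
  rw [div_pow, sq_sqrt n.cast_nonneg, Qexponent, div_div, mul_comm (n : ℝ)]
  exact div_le_div_of_nonneg_right (by nlinarith) (by positivity)

lemma dslope_sinh_Qexponent_le_qProfile (n k : ℕ) :
    dslope sinh 0 (Qexponent n k) ≤ qProfile ((k + 2) / √n) := by
  rw [qProfile_eq_dslope]
  refine monotoneOn_dslope_sinh (by simp [Qexponent]; positivity) (by simp; positivity) ?_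
  rw [div_pow, sq_sqrt n.cast_nonneg, Qexponent, div_div, mul_comm (n : ℝ)]
  exact div_le_div_of_nonneg_right (by nlinarith) (by positivity)

section RiemannSums

variable {f : ℝ → ℝ} {x₀ r : ℝ} {N : ℕ}

lemma MonotoneOn.comp_div_const (hr : 0 < r)
    (hf : MonotoneOn f (Set.Icc (x₀ / r) ((x₀ + N) / r))) :
    MonotoneOn (fun y ↦ f (y / r)) (Set.Icc x₀ (x₀ + N)) := by
  have hdiv {y : ℝ} (hy : y ∈ Set.Icc x₀ (x₀ + N)) : y / r ∈ Set.Icc (x₀ / r) ((x₀ + N) / r) :=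
    ⟨by gcongr; exact hy.1, by gcongr; exact hy.2⟩
  exact fun a ha b hb hab ↦ hf (hdiv ha) (hdiv hb) (by gcongr)

lemma MonotoneOn.integral_le_sum_div (hr : 0 < r)
    (hf : MonotoneOn f (Set.Icc (x₀ / r) ((x₀ + N) / r))) :
    ∫ x in x₀ / r..(x₀ + N) / r, f x ≤ (∑ i ∈ range N, f ((x₀ + (i + 1 : ℕ)) / r)) / r := by
  have h := (hf.comp_div_const hr).integral_le_sum
  rw [intervalIntegral.integral_comp_div _ hr.ne', smul_eq_mul] at h
  rw [le_div_iff₀ hr, mul_comm]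
  exact h

lemma MonotoneOn.sum_div_le_integral (hr : 0 < r)
    (hf : MonotoneOn f (Set.Icc (x₀ / r) ((x₀ + N) / r))) :
    (∑ i ∈ range N, f ((x₀ + i) / r)) / r ≤ ∫ x in x₀ / r..(x₀ + N) / r, f x := by
  have h := (hf.comp_div_const hr).sum_le_integral
  rw [intervalIntegral.integral_comp_div _ hr.ne', smul_eq_mul] at h
  rw [div_le_iff₀ hr, mul_comm]
  exact h

end RiemannSums

lemma tendsto_intervalIntegral_of_continuous {α : Type*} {l : Filter α} {f : ℝ → ℝ}
    (hf : Continuous f) {a b : α → ℝ} {A B : ℝ} (ha : Tendsto a l (𝓝 A))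
    (hb : Tendsto b l (𝓝 B)) :
    Tendsto (fun i ↦ ∫ x in a i..b i, f x) l (𝓝 (∫ x in A..B, f x)) := by
  have hint : ∀ a b : ℝ, IntervalIntegrable f MeasureTheory.volume a b :=
    fun _ _ ↦ hf.intervalIntegrable _ _
  have hF := intervalIntegral.continuous_primitive hint 0
  have h := ((hF.tendsto B).comp hb).sub ((hF.tendsto A).comp ha)
  rw [intervalIntegral.integral_interval_sub_left (hint 0 B) (hint 0 A)] at h
  exact h.congr fun i ↦ intervalIntegral.integral_interval_sub_left (hint 0 _) (hint 0 _)

section CriticalWindow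

variable {c : ℝ} {t : ℕ → ℕ}

lemma tendsto_inv_sqrt_natCast : Tendsto (fun n : ℕ ↦ (√n)⁻¹) atTop (𝓝 0) :=
  tendsto_inv_atTop_zero.comp (tendsto_sqrt_atTop.comp tendsto_natCast_atTop_atTop)

lemma tendsto_add_div_sqrt (ht : Tendsto (fun n ↦ (t n : ℝ) / √n) atTop (𝓝 c)) (x : ℝ) :
    Tendsto (fun n ↦ (t n + x) / √n) atTop (𝓝 c) := by
  have h := ht.add (tendsto_inv_sqrt_natCast.const_mul x)
  rw [mul_zero, add_zero] at h
  exact h.congr fun n ↦ by rw [add_div, div_eq_mul_inv x]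

lemma tendsto_add_div_natCast (ht : Tendsto (fun n ↦ (t n : ℝ) / √n) atTop (𝓝 c)) (x : ℝ) :
    Tendsto (fun n ↦ (t n + x) / n) atTop (𝓝 0) := by
  have h := (tendsto_add_div_sqrt ht x).mul tendsto_inv_sqrt_natCast
  rw [mul_zero] at h
  exact h.congr fun n ↦ by rw [← div_eq_mul_inv, div_div, mul_self_sqrt n.cast_nonneg]

lemma eventually_two_mul_add_one_le (ht : Tendsto (fun n ↦ (t n : ℝ) / √n) atTop (𝓝 c)) :
    ∀ᶠ n in atTop, 2 * (t n + 1) ≤ n := by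
  filter_upwards [(tendsto_add_div_natCast ht 1).eventually_le_const one_half_pos,
    eventually_gt_atTop 0] with n hn hpos
  rw [div_le_iff₀ (by exact_mod_cast hpos)] at hn
  exact_mod_cast (by linarith : (2 * (t n + 1) : ℝ) ≤ n)

lemma tendsto_sum_dslope_sinh_Qexponent_div_sqrt
    (ht : Tendsto (fun n ↦ (t n : ℝ) / √n) atTop (𝓝 c)) :
    Tendsto (fun n ↦ (∑ k ∈ range (t n + 1), dslope sinh 0 (Qexponent n k)) / √n) atTop
      (𝓝 (∫ x in (0 : ℝ)..c, qProfile x)) := by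
  have hq {a b : ℝ} (ha : 0 ≤ a) : MonotoneOn qProfile (Set.Icc a b) :=
    monotoneOn_qProfile.mono fun x hx ↦ ha.trans hx.1
  have hlow : Tendsto (fun n : ℕ ↦ ∫ x in (0 : ℝ) / √n..(0 + (t n + 1 : ℕ)) / √n, qProfile x)
      atTop (𝓝 (∫ x in (0 : ℝ)..c, qProfile x)) := by
    refine tendsto_intervalIntegral_of_continuous continuous_qProfile ?_ ?_
    · simp
    · simpa using tendsto_add_div_sqrt ht 1
  have hup : Tendsto (fun n : ℕ ↦ ∫ x in (2 : ℝ) / √n..(2 + (t n + 1 : ℕ)) / √n, qProfile x)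
      atTop (𝓝 (∫ x in (0 : ℝ)..c, qProfile x)) := by
    refine tendsto_intervalIntegral_of_continuous continuous_qProfile ?_ ?_
    · simpa [div_eq_mul_inv] using tendsto_inv_sqrt_natCast.const_mul 2
    · convert tendsto_add_div_sqrt ht 3 using 2
      push_cast
      ring
  refine tendsto_of_tendsto_of_tendsto_of_le_of_le' hlow hup ?_ ?_ <;>
    filter_upwards [eventually_gt_atTop 0] with n hn <;>
    have hr : 0 < √n := sqrt_pos.2 (by exact_mod_cast hn)
  · refine ((hq (by simp)).integral_le_sum_div hr).trans ?_
    gcongr with k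
    simpa [add_comm] using qProfile_le_dslope_sinh_Qexponent n k
  · refine le_trans ?_ ((hq (by positivity)).sum_div_le_integral hr)
    gcongr with k
    simpa [add_comm] using dslope_sinh_Qexponent_le_qProfile n k

lemma tendsto_S_sub_sum_dslope_sinh_div_sqrt
    (ht : Tendsto (fun n ↦ (t n : ℝ) / √n) atTop (𝓝 c)) :
    Tendsto (fun n ↦ (S n (t n) - ∑ k ∈ range (t n + 1), dslope sinh 0 (Qexponent n k)) / √n)
      atTop (𝓝 0) := by
  have h₁ := tendsto_add_div_sqrt ht 1
  have h₂ := tendsto_add_div_sqrt ht 2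
  have hbound := ((((continuous_cosh.tendsto _).comp ((h₁.mul h₂).div_const 2)).const_mul 2).mul
    (h₁.pow 2)).mul tendsto_inv_sqrt_natCast
  rw [mul_zero] at hbound
  refine squeeze_zero_norm' ?_ hbound
  filter_upwards [eventually_two_mul_add_one_le ht, eventually_gt_atTop 0] with n hn hpos
  have hn' : (0 : ℝ) < n := by exact_mod_cast hpos
  have hr : 0 < √n := sqrt_pos.2 hn'
  rw [norm_div, norm_of_nonneg hr.le, div_le_iff₀ hr]
  refine (abs_S_sub_sum_dslope_sinh_le hn).trans (le_of_eq ?_)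
  have hsq : √n ^ 2 = n := sq_sqrt hn'.le
  simp only [Function.comp, Qexponent]
  field_simp
  rw [hsq, mul_comm]

end CriticalWindow

theorem S_critical_regime_general (c : ℝ) (t : ℕ → ℕ)
    (ht : Tendsto (fun n => (t n : ℝ) / Real.sqrt n) atTop (nhds c)) :
    Tendsto (fun n => S n (t n) / Real.sqrt n) atTop
      (nhds (∫ x in (0 : ℝ)..c, qProfile x)) := by
  have h := (tendsto_S_sub_sum_dslope_sinh_div_sqrt ht).add
    (tendsto_sum_dslope_sinh_Qexponent_div_sqrt ht)
  rw [zero_add] at h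
  exact h.congr fun n ↦ by rw [← add_div, sub_add_cancel]

/-- In the critical regime `t(n)/√n → c > 0`, the cumulative LRU signal
energy satisfies `S_{n,t}/√n → ∫_0^c q(x) dx`. -/
theorem S_critical_regime (c : ℝ) (hc : 0 < c) (t : ℕ → ℕ)
    (ht : Tendsto (fun n => (t n : ℝ) / Real.sqrt n) atTop (nhds c)) :
    Tendsto (fun n => S n (t n) / Real.sqrt n) atTop
      (nhds (∫ x in (0 : ℝ)..c, qProfile x)) :=
  S_critical_regime_general c t ht
end

section
/- Let k = k(n) satisfy k/√n → ∞ and k/n^{2/3} → 0, and let Ψ(x) = (1+x)log(1+x) − x. Then nΨ(k/n) − k²/(2n) → 0; consequently Q_{n,k} ~ (n/k²)·exp(k²/(2n)), meaning the ratio of the two sides tends to 1. -/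
open Filter

/-- The exponent function `Ψ(x) = (1+x)log(1+x) − x`. -/
noncomputable def Psi (x : ℝ) : ℝ := (1 + x) * Real.log (1 + x) - x

/-!
Everything rests on two-sided bounds for `log (1 + x)`, `x ≥ 0`: from above by `x` and by
`sinh (log (1 + x)) = ((1 + x) - (1 + x)⁻¹) / 2`, from below by `2x / (x + 2)`. They give
`x²/2 - x³/4 ≤ Ψ x ≤ x²/2`, hence `nΨ(k/n) - k²/(2n) = O(k³/n²)`.

For `Q`, the first product is `exp (∑ j < k + 2, log (1 + j/n))`, and summing the same bounds puts
the exponent within `O(k³/n² + k/n)` of `k²/(2n)`; here `k/n = (k³/n²) / (k²/n) → 0`. The second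
product has modulus at most `1` once `k + 2 ≤ 2n`, so it is negligible against
`exp (k²/(2n)) → ∞`, and the prefactor `k² / ((k + 1)(k + 2))` tends to `1`.
-/

open Real Finset Topology

lemma log_one_add_le_self {x : ℝ} (hx : 0 ≤ x) : log (1 + x) ≤ x := by
  linarith [log_le_sub_one_of_pos (show 0 < 1 + x by linarith)]

lemma sub_sq_div_two_le_log_one_add {x : ℝ} (hx : 0 ≤ x) : x - x ^ 2 / 2 ≤ log (1 + x) := by
  refine le_trans ?_ (le_log_one_add_of_nonneg hx)
  rw [le_div_iff₀ (by linarith)]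
  nlinarith [pow_nonneg hx 3]

lemma Psi_le_sq_div_two {x : ℝ} (hx : 0 ≤ x) : Psi x ≤ x ^ 2 / 2 := by
  have hy : 0 < 1 + x := by linarith
  have hlog : log (1 + x) ≤ (1 + x - (1 + x)⁻¹) / 2 :=
    sinh_log hy ▸ self_le_sinh_iff.mpr (log_nonneg (by linarith))
  have hmul := mul_le_mul_of_nonneg_left hlog hy.le
  rw [Psi]
  field_simp at hmul
  nlinarith

lemma sq_div_two_sub_cube_div_four_le_Psi {x : ℝ} (hx : 0 ≤ x) :
    x ^ 2 / 2 - x ^ 3 / 4 ≤ Psi x := by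
  have hmul := mul_le_mul_of_nonneg_left (le_log_one_add_of_nonneg hx) (by linarith : 0 ≤ 1 + x)
  rw [mul_div_assoc', div_le_iff₀ (by linarith)] at hmul
  rw [Psi]
  nlinarith [pow_nonneg hx 4]

lemma abs_mul_Psi_div_sub_le {n k : ℝ} (hn : 0 < n) (hk : 0 ≤ k) :
    |n * Psi (k / n) - k ^ 2 / (2 * n)| ≤ k ^ 3 / n ^ 2 / 4 := by
  have hx : 0 ≤ k / n := div_nonneg hk hn.le
  have hupper := mul_le_mul_of_nonneg_left (Psi_le_sq_div_two hx) hn.le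
  have hlower := mul_le_mul_of_nonneg_left (sq_div_two_sub_cube_div_four_le_Psi hx) hn.le
  have h2 : n * ((k / n) ^ 2 / 2) = k ^ 2 / (2 * n) := by field_simp
  have h3 : n * ((k / n) ^ 2 / 2 - (k / n) ^ 3 / 4) = k ^ 2 / (2 * n) - k ^ 3 / n ^ 2 / 4 := by
    field_simp
  rw [abs_le]
  constructor <;> linarith

lemma sum_range_natCast_id (m : ℕ) : ∑ j ∈ range m, (j : ℝ) = m * (m - 1) / 2 := by
  induction m with
  | zero => simp
  | succ m ih => rw [sum_range_succ, ih]; push_cast; ring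

lemma abs_sum_log_one_add_div_sub_le {n : ℝ} (hn : 0 < n) {k : ℕ} (hk : 1 ≤ k) :
    |∑ j ∈ range (k + 2), log (1 + j / n) - k ^ 2 / (2 * n)| ≤
      6 * (k ^ 3 / n ^ 2) + 3 * (k / n) := by
  have hk' : (1 : ℝ) ≤ k := by exact_mod_cast hk
  have hlinear : ∑ j ∈ range (k + 2), (j / n : ℝ) = (k + 1) * (k + 2) / (2 * n) := by
    rw [← sum_div, sum_range_natCast_id]; push_cast; field_simp; ring
  have hsquares : ∑ j ∈ range (k + 2), (j / n : ℝ) ^ 2 ≤ (k + 2) * ((k + 1) / n) ^ 2 := by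
    calc ∑ j ∈ range (k + 2), (j / n : ℝ) ^ 2 ≤ ∑ _j ∈ range (k + 2), ((k + 1) / n : ℝ) ^ 2 := by
          refine sum_le_sum fun j hj => ?_
          have hjk : (j : ℝ) ≤ k + 1 := by exact_mod_cast Nat.lt_succ_iff.mp (mem_range.mp hj)
          gcongr
      _ = (k + 2) * ((k + 1) / n) ^ 2 := by simp
  have hupper : ∑ j ∈ range (k + 2), log (1 + j / n) ≤ ∑ j ∈ range (k + 2), (j / n : ℝ) :=
    sum_le_sum fun j _ => log_one_add_le_self (by positivity)
  have hlower : ∑ j ∈ range (k + 2), ((j / n : ℝ) - (j / n) ^ 2 / 2) ≤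
      ∑ j ∈ range (k + 2), log (1 + j / n) :=
    sum_le_sum fun j _ => sub_sq_div_two_le_log_one_add (by positivity)
  rw [sum_sub_distrib, hlinear, ← sum_div] at hlower
  have hcube : (k + 2) * ((k + 1) / n) ^ 2 ≤ 12 * (k ^ 3 / n ^ 2) := by
    rw [div_pow, mul_div_assoc', mul_div_assoc', div_le_div_iff_of_pos_right (by positivity)]
    calc ((k : ℝ) + 2) * (k + 1) ^ 2 ≤ (3 * k) * (2 * k) ^ 2 := by gcongr <;> linarith
      _ = 12 * (k : ℝ) ^ 3 := by ring
  have hgap : (k + 1) * (k + 2) / (2 * n) - k ^ 2 / (2 * n) ≤ 3 * (k / n) := by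
    rw [div_sub_div_same, mul_div_assoc', div_le_div_iff₀ (by positivity) hn]
    nlinarith
  have hnonneg : 0 ≤ (k + 1) * (k + 2) / (2 * n) - k ^ 2 / (2 * n) := by
    rw [div_sub_div_same]; exact div_nonneg (by nlinarith) (by positivity)
  rw [abs_le]
  constructor <;> nlinarith [div_nonneg (by positivity : (0:ℝ) ≤ k) hn.le]

lemma abs_prod_one_sub_div_le_one {n : ℝ} {m : ℕ} (hm : (m : ℝ) ≤ 2 * n) :
    |∏ j ∈ range m, (1 - j / n)| ≤ 1 := by
  rw [abs_prod]
  refine prod_le_one (fun _ _ => abs_nonneg _) fun j hj => ?_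
  have hj : (j : ℝ) + 1 ≤ m := by exact_mod_cast mem_range.mp hj
  have hn : 0 < n := by linarith [(Nat.cast_nonneg j : (0 : ℝ) ≤ j)]
  have hjn : (j : ℝ) / n ≤ 2 := by rw [div_le_iff₀ hn]; linarith
  rw [abs_le]
  constructor <;> linarith [div_nonneg (Nat.cast_nonneg j) hn.le]

lemma Q_div_eq {n k : ℕ} (hn : n ≠ 0) (hk : k ≠ 0) :
    Q n k / ((n / (k : ℝ) ^ 2) * exp ((k : ℝ) ^ 2 / (2 * n))) =
      (k : ℝ) ^ 2 / ((k + 1) * (k + 2)) *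
        (exp (∑ j ∈ range (k + 2), log (1 + j / n) - (k : ℝ) ^ 2 / (2 * n)) -
          (∏ j ∈ range (k + 2), (1 - (j : ℝ) / n)) * exp (-((k : ℝ) ^ 2 / (2 * n)))) := by
  have hprod : ∏ j ∈ range (k + 2), (1 + (j : ℝ) / n) =
      exp (∑ j ∈ range (k + 2), log (1 + j / n)) := by
    rw [exp_sum]
    exact prod_congr rfl fun j _ => (exp_log (by positivity)).symm
  rw [Q, hprod, exp_sub, exp_neg]
  field_simp

lemma tendsto_sq_div_add_one_mul_add_two :
    Tendsto (fun x : ℝ => x ^ 2 / ((x + 1) * (x + 2))) atTop (𝓝 1) := by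
  have hcont : ContinuousAt (fun y : ℝ => 1 / ((1 + y) * (1 + 2 * y))) 0 := by
    fun_prop (disch := norm_num)
  have hcomp := hcont.tendsto.comp tendsto_inv_atTop_zero
  norm_num at hcomp
  refine hcomp.congr' ?_
  filter_upwards [eventually_gt_atTop 0] with x hx
  simp only [Function.comp_apply]
  field_simp

lemma tendsto_cube_div_sq_of_tendsto_div_rpow {α : Type*} {l : Filter α} {a b : α → ℝ}
    (hb : ∀ x, 0 ≤ b x) (h : Tendsto (fun x => a x / b x ^ ((2 : ℝ) / 3)) l (𝓝 0)) :
    Tendsto (fun x => a x ^ 3 / b x ^ 2) l (𝓝 0) := by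
  have hpow : ∀ x, (a x / b x ^ ((2 : ℝ) / 3)) ^ 3 = a x ^ 3 / b x ^ 2 := fun x => by
    rw [div_pow, ← rpow_natCast (b x ^ _), ← rpow_mul (hb x)]
    norm_num
  simpa [hpow] using h.pow 3

lemma tendsto_sq_div_of_tendsto_div_sqrt {α : Type*} {l : Filter α} {a b : α → ℝ}
    (hb : ∀ x, 0 ≤ b x) (h : Tendsto (fun x => a x / √(b x)) l atTop) :
    Tendsto (fun x => a x ^ 2 / b x) l atTop := by
  have hpow : ∀ x, (a x / √(b x)) ^ 2 = a x ^ 2 / b x := fun x => by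
    rw [div_pow, sq_sqrt (hb x)]
  simpa [Function.comp_def, hpow] using (tendsto_pow_atTop two_ne_zero).comp h

lemma tendsto_div_of_tendsto_cube_div_sq {α : Type*} {l : Filter α} {a b : α → ℝ}
    (hsq : Tendsto (fun x => a x ^ 2 / b x) l atTop)
    (hcube : Tendsto (fun x => a x ^ 3 / b x ^ 2) l (𝓝 0)) :
    Tendsto (fun x => a x / b x) l (𝓝 0) := by
  have hprod := hcube.mul hsq.inv_tendsto_atTop
  rw [zero_mul] at hprod
  refine hprod.congr fun x => ?_
  rcases eq_or_ne (a x) 0 with ha | ha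
  · simp [ha]
  rcases eq_or_ne (b x) 0 with hb | hb
  · simp [hb]
  simp only [Pi.inv_apply]
  field_simp

lemma tendsto_mul_Psi_div_sub {α : Type*} {l : Filter α} {a b : α → ℝ}
    (ha : ∀ x, 0 ≤ a x) (hb : ∀ᶠ x in l, 0 < b x)
    (hcube : Tendsto (fun x => a x ^ 3 / b x ^ 2) l (𝓝 0)) :
    Tendsto (fun x => b x * Psi (a x / b x) - a x ^ 2 / (2 * b x)) l (𝓝 0) := by
  refine squeeze_zero_norm' ?_ (by simpa using hcube.div_const 4)
  filter_upwards [hb] with x hx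
  exact abs_mul_Psi_div_sub_le hx (ha x)

lemma tendsto_atTop_of_tendsto_sq_div {α : Type*} {l : Filter α} {a b : α → ℝ}
    (ha : ∀ x, 0 ≤ a x) (hb : ∀ x, 0 ≤ b x) (hab : ∀ᶠ x in l, a x ≤ b x)
    (hsq : Tendsto (fun x => a x ^ 2 / b x) l atTop) :
    Tendsto a l atTop := by
  refine tendsto_atTop_mono' _ ?_ hsq
  filter_upwards [hab] with x h
  rw [sq, mul_div_assoc]
  exact mul_le_of_le_one_right (ha x) (div_le_one_of_le₀ h (hb x))

lemma tendsto_prod_one_sub_div_mul_exp_neg {k : ℕ → ℕ}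
    (hsq : Tendsto (fun n : ℕ => (k n : ℝ) ^ 2 / n) atTop atTop)
    (hsmall : ∀ᶠ n : ℕ in atTop, (k n : ℝ) ≤ n) :
    Tendsto (fun n : ℕ => (∏ j ∈ range (k n + 2), (1 - (j : ℝ) / n)) *
      exp (-((k n : ℝ) ^ 2 / (2 * n)))) atTop (𝓝 0) := by
  have hexp : Tendsto (fun n : ℕ => exp (-((k n : ℝ) ^ 2 / (2 * n)))) atTop (𝓝 0) := by
    refine tendsto_exp_neg_atTop_nhds_zero.comp ?_
    simpa [div_div, mul_comm] using hsq.atTop_div_const two_pos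
  refine squeeze_zero_norm' ?_ hexp
  filter_upwards [hsmall, eventually_ge_atTop 2] with n hkn hn
  have hn' : (2 : ℝ) ≤ n := by exact_mod_cast hn
  rw [norm_mul, norm_of_nonneg (exp_pos _).le]
  refine mul_le_of_le_one_left (exp_pos _).le (abs_prod_one_sub_div_le_one ?_)
  push_cast
  linarith

lemma tendsto_Q_div {k : ℕ → ℕ}
    (hsq : Tendsto (fun n : ℕ => (k n : ℝ) ^ 2 / n) atTop atTop)
    (hcube : Tendsto (fun n : ℕ => (k n : ℝ) ^ 3 / n ^ 2) atTop (𝓝 0)) :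
    Tendsto (fun n => Q n (k n) /
      (((n : ℝ) / (k n : ℝ) ^ 2) * exp ((k n : ℝ) ^ 2 / (2 * n)))) atTop (𝓝 1) := by
  have hlin := tendsto_div_of_tendsto_cube_div_sq hsq hcube
  have hsmall : ∀ᶠ n : ℕ in atTop, (k n : ℝ) ≤ n := by
    filter_upwards [hlin.eventually (ge_mem_nhds one_pos), eventually_gt_atTop 0] with n h hn
    rwa [div_le_one (by exact_mod_cast hn)] at h
  have hk := tendsto_atTop_of_tendsto_sq_div (fun n => Nat.cast_nonneg (k n))
    (fun n => Nat.cast_nonneg n) hsmall hsq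
  have hpos : ∀ᶠ n : ℕ in atTop, 1 ≤ k n := by
    filter_upwards [hk.eventually_ge_atTop 1] with n h
    exact_mod_cast h
  have hlog : Tendsto (fun n : ℕ =>
      ∑ j ∈ range (k n + 2), log (1 + j / n) - (k n : ℝ) ^ 2 / (2 * n)) atTop (𝓝 0) := by
    refine squeeze_zero_norm' ?_ (by simpa using (hcube.const_mul 6).add (hlin.const_mul 3))
    filter_upwards [hpos, eventually_gt_atTop 0] with n hkn hn
    exact abs_sum_log_one_add_div_sub_le (by exact_mod_cast hn) hkn
  have hratio := (tendsto_sq_div_add_one_mul_add_two.comp hk).mul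
    (((continuous_exp.tendsto 0).comp hlog).sub (tendsto_prod_one_sub_div_mul_exp_neg hsq hsmall))
  rw [exp_zero, sub_zero, mul_one] at hratio
  refine hratio.congr' ?_
  filter_upwards [hpos, eventually_gt_atTop 0] with n hkn hn
  exact (Q_div_eq hn.ne' (by omega)).symm

/-- If `k/√n → ∞` and `k/n^{2/3} → 0`, then `nΨ(k/n) − k²/(2n) → 0`, and
consequently `Q_{n,k} ~ (n/k²)·exp(k²/(2n))`. -/
theorem Q_supercritical_mesoscopic (k : ℕ → ℕ)
    (h1 : Tendsto (fun n => (k n : ℝ) / Real.sqrt n) atTop atTop)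
    (h2 : Tendsto (fun n => (k n : ℝ) / (n : ℝ) ^ ((2 : ℝ) / 3)) atTop (nhds 0)) :
    Tendsto (fun n : ℕ => (n : ℝ) * Psi ((k n : ℝ) / n) - (k n : ℝ) ^ 2 / (2 * n))
        atTop (nhds 0) ∧
    Tendsto (fun n => Q n (k n) /
        (((n : ℝ) / (k n : ℝ) ^ 2) * Real.exp ((k n : ℝ) ^ 2 / (2 * n))))
      atTop (nhds 1) := by
  have hcube := tendsto_cube_div_sq_of_tendsto_div_rpow (fun n => Nat.cast_nonneg n) h2
  have hsq := tendsto_sq_div_of_tendsto_div_sqrt (fun n => Nat.cast_nonneg n) h1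
  refine ⟨tendsto_mul_Psi_div_sub (fun n => Nat.cast_nonneg _) ?_ hcube, tendsto_Q_div hsq hcube⟩
  filter_upwards [eventually_gt_atTop 0] with n hn
  exact Nat.cast_pos.mpr hn
end
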